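/- Let T > 0, r, s > -1, and C > 0. Suppose f, g : [0,T) → [0,∞) are continuous functions satisfying f(t) ≤ C ∫₀^t σ^r g(σ) dσ and g(t) ≤ C ∫₀^t σ^s f(σ) dσ for all t ∈ (0,T). Then f ≡ 0 and g ≡ 0 on [0,T). -/

import Mathlib

open MeasureTheory intervalIntegral Set Filter Topology

theorem stmt_5 (T r s C : ℝ) (hT : 0 < T) (hr : -1 < r) (hs : -1 < s) (hC : 0 < C)
    (f g : ℝ → ℝ)
    (hf_cont : ContinuousOn f (Set.Ico 0 T)) (hg_cont : ContinuousOn g (Set.Ico 0 T))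
    (hf_nn : ∀ t ∈ Set.Ico (0:ℝ) T, 0 ≤ f t) (hg_nn : ∀ t ∈ Set.Ico (0:ℝ) T, 0 ≤ g t)
    (hf : ∀ t ∈ Set.Ioo (0:ℝ) T, f t ≤ C * ∫ σ in (0:ℝ)..t, σ ^ r * g σ)
    (hg : ∀ t ∈ Set.Ioo (0:ℝ) T, g t ≤ C * ∫ σ in (0:ℝ)..t, σ ^ s * f σ) :
    ∀ t ∈ Set.Ico (0:ℝ) T, f t = 0 ∧ g t = 0 := by
  have hr1 : (0:ℝ) < r + 1 := by linarith
  have hs1 : (0:ℝ) < s + 1 := by linarith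
  set φ : ℝ → ℝ := fun σ => σ ^ r * g σ with hφdef
  set ψ : ℝ → ℝ := fun σ => σ ^ s * f σ with hψdef
  set F : ℝ → ℝ := fun u => ∫ σ in (0:ℝ)..u, φ σ with hFdef
  set G : ℝ → ℝ := fun u => ∫ σ in (0:ℝ)..u, ψ σ with hGdef
  -- key: vanishing of F + G on [0, t₀] for every t₀ < T
  have key : ∀ t₀ ∈ Set.Ioo (0:ℝ) T, ∀ u ∈ Set.Icc 0 t₀, F u = 0 ∧ G u = 0 := by
    intro t₀ ht₀ u hu
    have hIccT : Set.Icc (0:ℝ) t₀ ⊆ Set.Ico 0 T := fun x hx => ⟨hx.1, lt_of_le_of_lt hx.2 ht₀.2⟩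
    have huIcc : Set.uIcc (0:ℝ) t₀ = Set.Icc 0 t₀ := Set.uIcc_of_le ht₀.1.le
    have hφint : IntervalIntegrable φ volume 0 t₀ := by
      apply (intervalIntegral.intervalIntegrable_rpow' hr).mul_continuousOn
      rw [huIcc]; exact hg_cont.mono hIccT
    have hψint : IntervalIntegrable ψ volume 0 t₀ := by
      apply (intervalIntegral.intervalIntegrable_rpow' hs).mul_continuousOn
      rw [huIcc]; exact hf_cont.mono hIccT
    have hφint' : ∀ x ∈ Set.Icc (0:ℝ) t₀, IntervalIntegrable φ volume 0 x := by
      intro x hx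
      exact hφint.mono_set (by rw [huIcc, Set.uIcc_of_le hx.1]; exact Set.Icc_subset_Icc_right hx.2)
    have hψint' : ∀ x ∈ Set.Icc (0:ℝ) t₀, IntervalIntegrable ψ volume 0 x := by
      intro x hx
      exact hψint.mono_set (by rw [huIcc, Set.uIcc_of_le hx.1]; exact Set.Icc_subset_Icc_right hx.2)
    -- nonnegativity of F, G
    have hFnn : ∀ x ∈ Set.Icc (0:ℝ) t₀, 0 ≤ F x := by
      intro x hx
      apply intervalIntegral.integral_nonneg hx.1
      intro σ hσ
      have hσm : σ ∈ Set.Ico (0:ℝ) T := hIccT ⟨hσ.1, le_trans hσ.2 hx.2⟩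
      exact mul_nonneg (Real.rpow_nonneg hσ.1 r) (hg_nn σ hσm)
    have hGnn : ∀ x ∈ Set.Icc (0:ℝ) t₀, 0 ≤ G x := by
      intro x hx
      apply intervalIntegral.integral_nonneg hx.1
      intro σ hσ
      have hσm : σ ∈ Set.Ico (0:ℝ) T := hIccT ⟨hσ.1, le_trans hσ.2 hx.2⟩
      exact mul_nonneg (Real.rpow_nonneg hσ.1 s) (hf_nn σ hσm)
    -- the weight and exponential
    set W : ℝ → ℝ := fun x => C * (x ^ (r+1) / (r+1) + x ^ (s+1) / (s+1)) with hWdef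
    set Φ : ℝ → ℝ := fun x => (F x + G x) * Real.exp (-(W x)) with hΦdef
    -- continuity of Φ on Icc 0 t₀
    have hFcont : ContinuousOn F (Set.Icc 0 t₀) := by
      have := intervalIntegral.continuousOn_primitive_interval' hφint
        (by rw [huIcc]; exact Set.left_mem_Icc.2 ht₀.1.le)
      rwa [huIcc] at this
    have hGcont : ContinuousOn G (Set.Icc 0 t₀) := by
      have := intervalIntegral.continuousOn_primitive_interval' hψint
        (by rw [huIcc]; exact Set.left_mem_Icc.2 ht₀.1.le)
      rwa [huIcc] at this
    have hWcont : Continuous W := by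
      apply continuous_const.mul
      apply Continuous.add
      · exact (Real.continuous_rpow_const hr1.le).div_const _
      · exact (Real.continuous_rpow_const hs1.le).div_const _
    have hΦcont : ContinuousOn Φ (Set.Icc 0 t₀) :=
      (hFcont.add hGcont).mul ((hWcont.neg.rexp).continuousOn)
    -- derivative of Φ is nonpositive on the interior
    have hΦderiv : ∀ x ∈ Set.Ioo (0:ℝ) t₀,
        HasDerivAt Φ (((φ x + ψ x) - C * (x ^ r + x ^ s) * (F x + G x)) * Real.exp (-(W x))) x := by
      intro x hx
      have hx0 : (0:ℝ) < x := hx.1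
      have hxT : x < T := lt_trans hx.2 ht₀.2
      have hopen : IsOpen (Set.Ioo (0:ℝ) T) := isOpen_Ioo
      have hxmem : x ∈ Set.Ioo (0:ℝ) T := ⟨hx0, hxT⟩
      have hφc : ContinuousOn φ (Set.Ioo 0 T) := by
        apply ContinuousOn.mul
        · exact fun y hy => (Real.continuousAt_rpow_const y r (Or.inl (ne_of_gt hy.1))).continuousWithinAt
        · exact hg_cont.mono Set.Ioo_subset_Ico_self
      have hψc : ContinuousOn ψ (Set.Ioo 0 T) := by
        apply ContinuousOn.mul
        · exact fun y hy => (Real.continuousAt_rpow_const y s (Or.inl (ne_of_gt hy.1))).continuousWithinAt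
        · exact hf_cont.mono Set.Ioo_subset_Ico_self
      have hF' : HasDerivAt F (φ x) x :=
        intervalIntegral.integral_hasDerivAt_right (hφint' x ⟨hx0.le, hx.2.le⟩)
          (hφc.stronglyMeasurableAtFilter hopen x hxmem)
          (hφc.continuousAt (hopen.mem_nhds hxmem))
      have hG' : HasDerivAt G (ψ x) x :=
        intervalIntegral.integral_hasDerivAt_right (hψint' x ⟨hx0.le, hx.2.le⟩)
          (hψc.stronglyMeasurableAtFilter hopen x hxmem)
          (hψc.continuousAt (hopen.mem_nhds hxmem))
      have hW' : HasDerivAt W (C * (x ^ r + x ^ s)) x := by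
        have h1 : HasDerivAt (fun y : ℝ => y ^ (r+1)) ((r+1) * x ^ r) x := by
          have := Real.hasDerivAt_rpow_const (p := r + 1) (Or.inl (ne_of_gt hx0))
          simpa using this
        have h2 : HasDerivAt (fun y : ℝ => y ^ (s+1)) ((s+1) * x ^ s) x := by
          have := Real.hasDerivAt_rpow_const (p := s + 1) (Or.inl (ne_of_gt hx0))
          simpa using this
        have := (((h1.div_const (r+1)).add (h2.div_const (s+1))).const_mul C)
        refine this.congr_deriv ?_
        rw [mul_div_cancel_left₀ _ hr1.ne', mul_div_cancel_left₀ _ hs1.ne']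
      have hE' : HasDerivAt (fun y => Real.exp (-(W y))) (-(C * (x ^ r + x ^ s)) * Real.exp (-(W x))) x := by
        have := (hW'.neg).exp
        refine this.congr_deriv ?_
        simp only [Pi.neg_apply]; ring
      have := (hF'.add hG').mul hE'
      refine this.congr_deriv ?_
      simp only [Pi.add_apply]; ring
    have hΦnonpos : ∀ x ∈ Set.Ioo (0:ℝ) t₀, deriv Φ x ≤ 0 := by
      intro x hx
      rw [(hΦderiv x hx).deriv]
      have hx0 : (0:ℝ) < x := hx.1
      have hxT : x < T := lt_trans hx.2 ht₀.2
      have hFx : 0 ≤ F x := hFnn x ⟨hx0.le, hx.2.le⟩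
      have hGx : 0 ≤ G x := hGnn x ⟨hx0.le, hx.2.le⟩
      have hgb : g x ≤ C * G x := hg x ⟨hx0, hxT⟩
      have hfb : f x ≤ C * F x := hf x ⟨hx0, hxT⟩
      have hxr : (0:ℝ) ≤ x ^ r := Real.rpow_nonneg hx0.le r
      have hxs : (0:ℝ) ≤ x ^ s := Real.rpow_nonneg hx0.le s
      apply mul_nonpos_of_nonpos_of_nonneg _ (Real.exp_nonneg _)
      have h1 : φ x ≤ x ^ r * (C * G x) := mul_le_mul_of_nonneg_left hgb hxr
      have h2 : ψ x ≤ x ^ s * (C * F x) := mul_le_mul_of_nonneg_left hfb hxs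
      have h3 : x ^ r * (C * G x) + x ^ s * (C * F x) ≤ C * (x ^ r + x ^ s) * (F x + G x) := by
        nlinarith [mul_nonneg hxr hFx, mul_nonneg hxs hGx, hC.le]
      linarith
    have hanti : AntitoneOn Φ (Set.Icc 0 t₀) := by
      apply antitoneOn_of_deriv_nonpos (convex_Icc 0 t₀) hΦcont
      · intro x hx
        rw [interior_Icc] at hx
        exact ((hΦderiv x hx).differentiableAt).differentiableWithinAt
      · intro x hx
        rw [interior_Icc] at hx
        exact hΦnonpos x hx
    have hΦ0 : Φ 0 = 0 := by
      simp [hΦdef, hFdef, hGdef]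
    have hΦu : Φ u ≤ 0 := by
      have := hanti (Set.left_mem_Icc.2 ht₀.1.le) hu hu.1
      rwa [hΦ0] at this
    have hsum : F u + G u = 0 := by
      have hpos : 0 < Real.exp (-(W u)) := Real.exp_pos _
      have h0 : 0 ≤ F u + G u := by linarith [hFnn u hu, hGnn u hu]
      have hΦu' : (F u + G u) * Real.exp (-(W u)) ≤ 0 := hΦu
      nlinarith [hΦu', hpos]
    constructor
    · linarith [hFnn u hu, hGnn u hu]
    · linarith [hFnn u hu, hGnn u hu]
  -- now f, g vanish on (0, T)
  have keyfg : ∀ u ∈ Set.Ioo (0:ℝ) T, f u = 0 ∧ g u = 0 := by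
    intro u hu
    set t₀ := (u + T) / 2 with ht₀def
    have ht₀ : t₀ ∈ Set.Ioo (0:ℝ) T := ⟨by linarith [hu.1, hu.2], by linarith [hu.2]⟩
    have hu' : u ∈ Set.Icc (0:ℝ) t₀ := ⟨hu.1.le, by linarith [hu.2]⟩
    obtain ⟨hFu, hGu⟩ := key t₀ ht₀ u hu'
    have hfu := hf u hu
    have hgu := hg u hu
    rw [show (∫ σ in (0:ℝ)..u, σ ^ r * g σ) = F u from rfl] at hfu
    rw [show (∫ σ in (0:ℝ)..u, σ ^ s * f σ) = G u from rfl] at hgu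
    constructor
    · have := hf_nn u ⟨hu.1.le, hu.2⟩; rw [hFu] at hfu; linarith
    · have := hg_nn u ⟨hu.1.le, hu.2⟩; rw [hGu] at hgu; linarith
  -- extend to t = 0 by continuity
  intro t ht
  rcases eq_or_lt_of_le ht.1 with h0 | h0
  · subst h0
    have hne : (𝓝[Set.Ioo (0:ℝ) T] (0:ℝ)).NeBot := by
      rw [← mem_closure_iff_nhdsWithin_neBot, closure_Ioo hT.ne]
      exact ⟨le_refl 0, hT.le⟩
    have hfl : Tendsto f (𝓝[Set.Ioo (0:ℝ) T] 0) (𝓝 (f 0)) :=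
      ((hf_cont.continuousWithinAt ht).mono Set.Ioo_subset_Ico_self)
    have hgl : Tendsto g (𝓝[Set.Ioo (0:ℝ) T] 0) (𝓝 (g 0)) :=
      ((hg_cont.continuousWithinAt ht).mono Set.Ioo_subset_Ico_self)
    have hf0 : Tendsto f (𝓝[Set.Ioo (0:ℝ) T] 0) (𝓝 0) := by
      apply Tendsto.congr' _ tendsto_const_nhds
      filter_upwards [self_mem_nhdsWithin] with x hx
      exact (keyfg x hx).1.symm
    have hg0 : Tendsto g (𝓝[Set.Ioo (0:ℝ) T] 0) (𝓝 0) := by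
      apply Tendsto.congr' _ tendsto_const_nhds
      filter_upwards [self_mem_nhdsWithin] with x hx
      exact (keyfg x hx).2.symm
    exact ⟨tendsto_nhds_unique hfl hf0, tendsto_nhds_unique hgl hg0⟩
  · exact keyfg t ⟨h0, ht.2⟩
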